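/- For all L, M ∈ 𝐋 the following are equivalent: (i) for every t = 1,…,T, the matrix (MᵀL)_{t,t} is positive semidefinite and rk((LᵀL)_{t,t}) = rk((MᵀL)_{t,t}); (ii) 𝐎*(L,M) = 𝐎*(L,L). -/

import Mathlib

open Matrix Filter Topology

/-- Square matrices of size `dT × dT`, indexed by blocks: index `(t, i)` is
row/column `i` within block `t`. -/
abbrev Mat (d T : ℕ) := Matrix (Fin T × Fin d) (Fin T × Fin d) ℝ

/-- The `t`-th diagonal `d × d` block of a `dT × dT` matrix. -/
def blk {d T : ℕ} (A : Mat d T) (t : Fin T) : Matrix (Fin d) (Fin d) ℝ :=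
  fun i j => A (t, i) (t, j)

/-- The `t`-th block column of a `dT × dT` matrix, a `dT × d` matrix. -/
def colBlk {d T : ℕ} (A : Mat d T) (t : Fin T) : Matrix (Fin T × Fin d) (Fin d) ℝ :=
  fun p j => A p (t, j)

/-- Membership in `𝐋`: block lower triangular matrices. -/
def memL {d T : ℕ} (A : Mat d T) : Prop :=
  ∀ (t s : Fin T) (i j : Fin d), t < s → A (t, i) (s, j) = 0

/-- Membership in `𝐎`: block diagonal matrices with orthogonal `d × d` diagonal blocks
(equivalently: block diagonal and orthogonal). -/
def memO {d T : ℕ} (O : Mat d T) : Prop :=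
  (∀ (t s : Fin T) (i j : Fin d), t ≠ s → O (t, i) (s, j) = 0) ∧ Oᵀ * O = 1

/-- The Frobenius norm of a real matrix. -/
noncomputable def frobNorm {m n : Type*} [Fintype m] [Fintype n] (A : Matrix m n ℝ) : ℝ :=
  Real.sqrt (∑ i, ∑ j, (A i j) ^ 2)

/-- The Frobenius inner product of two real matrices. -/
noncomputable def frobInner {m n : Type*} [Fintype m] [Fintype n] (A B : Matrix m n ℝ) : ℝ :=
  ∑ i, ∑ j, A i j * B i j

/-- The adapted Bures–Wasserstein distance `d_ABW(L, M) = inf_{O ∈ 𝐎} ‖L - M O‖_F`. -/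
noncomputable def dABW {d T : ℕ} (L M : Mat d T) : ℝ :=
  sInf {r : ℝ | ∃ O : Mat d T, memO O ∧ r = frobNorm (L - M * O)}

/-- The set `𝐎*(L, M)` of optimizers of `inf_{O ∈ 𝐎} ‖L - M O‖_F`. -/
noncomputable def OStar {d T : ℕ} (L M : Mat d T) : Set (Mat d T) :=
  {O | memO O ∧ frobNorm (L - M * O) = dABW L M}

/-- The set `𝐕(L) = {M P - L : M ∈ 𝐋, P ∈ 𝐎*(L, M)}`. -/
noncomputable def VSet {d T : ℕ} (L : Mat d T) : Set (Mat d T) :=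
  {V | ∃ M P : Mat d T, memL M ∧ P ∈ OStar L M ∧ V = M * P - L}

/-- The set `𝒱(L) = {V ∈ 𝐋 : (Vᵀ L)_{t,t} is symmetric for all t}`. -/
def calV {d T : ℕ} (L : Mat d T) : Set (Mat d T) :=
  {V | memL V ∧ ∀ t : Fin T, (blk (Vᵀ * L) t).IsSymm}

/-- The set `𝐋^reg = {L ∈ 𝐋 : (Lᵀ L)_{t,t} is positive definite for all t}`. -/
def LReg {d T : ℕ} : Set (Mat d T) :=
  {L | memL L ∧ ∀ t : Fin T, (blk (Lᵀ * L) t).PosDef}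

/-- The sum of the singular values of a real square matrix `A`,
i.e. the trace of the positive semidefinite square root of `Aᵀ A`. -/
noncomputable def svSum {n : ℕ} (A : Matrix (Fin n) (Fin n) ℝ) : ℝ :=
  ((Matrix.posSemidef_conjTranspose_mul_self A).1.eigenvectorUnitary.1 *
    diagonal ((RCLike.ofReal : ℝ → ℝ) ∘ ((Matrix.posSemidef_conjTranspose_mul_self A).1.eigenvalues · |>.sqrt)) *
    (star (Matrix.posSemidef_conjTranspose_mul_self A).1.eigenvectorUnitary :
      Matrix (Fin n) (Fin n) ℝ)).trace

/-- The operator norm of a real matrix: the supremum of the euclidean norm `‖A x‖₂`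
over the euclidean unit ball. -/
noncomputable def opNorm {m n : Type*} [Fintype m] [Fintype n] (A : Matrix m n ℝ) : ℝ :=
  sSup {r : ℝ | ∃ x : n → ℝ, (∑ j, (x j) ^ 2) ≤ 1 ∧ r = Real.sqrt (∑ i, (A.mulVec x i) ^ 2)}

/-!
Every `O ∈ 𝐎` is orthogonal, so `‖L - M O‖_F² = ‖L‖_F² + ‖M‖_F² - 2 tr (Oᵀ Mᵀ L)`, and for block
diagonal `O` the trace splits as `∑ₜ tr (Oₜᵀ Aₜ)` with `Aₜ = (Mᵀ L)_{t,t}`. Hence `O` is optimal iff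
each `Oₜ` maximizes `R ↦ tr (Rᵀ Aₜ)` over the orthogonal group, i.e. iff `Oₜᵀ Aₜ ⪰ 0`: necessity
from the first-order condition along rotations `exp (s K)` and from Householder reflections,
sufficiency from `tr (G P) ≤ tr P` for `P ⪰ 0`. When `Aₜ ⪰ 0` this says `Oₜ Aₜ = Aₜ`. The
stabilizers of `Aₜ` and `Bₜ = (Lᵀ L)_{t,t}` in the orthogonal group agree iff `ker Aₜ = ker Bₜ`
(test with reflections in `u⊥`), and as `ker Bₜ ⊆ ker Aₜ` always, this is the rank condition.
-/

lemma Matrix.PosSemidef.isSymm {n : Type*} {A : Matrix n n ℝ} (hA : A.PosSemidef) : A.IsSymm :=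
  isHermitian_iff_isSymm.mp hA.1

lemma Matrix.posSemidef_transpose_mul_self {m n : Type*} [Fintype m] [Finite n] (Y : Matrix m n ℝ) :
    (Yᵀ * Y).PosSemidef := by
  simpa using posSemidef_conjTranspose_mul_self Y

section OrthogonalMaximization
variable {n : Type*} [Fintype n] [DecidableEq n]

lemma transpose_mul_self_mul {G H : Matrix n n ℝ} (hG : Gᵀ * G = 1) (hH : Hᵀ * H = 1) :
    (G * H)ᵀ * (G * H) = 1 := by
  rw [transpose_mul, Matrix.mul_assoc, ← Matrix.mul_assoc Gᵀ, hG, Matrix.one_mul, hH]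

lemma transpose_mul_self_transpose {G : Matrix n n ℝ} (hG : Gᵀ * G = 1) : Gᵀᵀ * Gᵀ = 1 := by
  rw [transpose_transpose]
  exact mul_eq_one_comm.mp hG

/-- For `u = 0` the coefficient `2 / (u ⬝ᵥ u)` is `0`, so `householder 0 = 1`. -/
noncomputable def householder (u : n → ℝ) : Matrix n n ℝ :=
  1 - (2 / (u ⬝ᵥ u)) • vecMulVec u u

lemma transpose_householder (u : n → ℝ) : (householder u)ᵀ = householder u := by
  simp [householder, transpose_vecMulVec]

lemma householder_transpose_mul_self (u : n → ℝ) : (householder u)ᵀ * householder u = 1 := by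
  have hc : 2 / (u ⬝ᵥ u) * (2 / (u ⬝ᵥ u)) * (u ⬝ᵥ u) = 2 * (2 / (u ⬝ᵥ u)) := by
    rcases eq_or_ne (u ⬝ᵥ u) 0 with h | h
    · simp [h]
    · field_simp
  rw [transpose_householder, householder, sub_mul, mul_sub, mul_sub, one_mul, mul_one, one_mul,
    smul_mul_smul_comm, vecMulVec_mul_vecMulVec, vecMulVec_smul, smul_smul, hc]
  module

lemma trace_householder_mul (u : n → ℝ) (N : Matrix n n ℝ) :
    (householder u * N).trace = N.trace - 2 / (u ⬝ᵥ u) * (u ⬝ᵥ N *ᵥ u) := by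
  rw [householder, sub_mul, one_mul, smul_mul, vecMulVec_mul, trace_sub, trace_smul,
    trace_vecMulVec, dotProduct_comm u (u ᵥ* N), ← dotProduct_mulVec, smul_eq_mul]

lemma householder_mul_eq_self_iff {A : Matrix n n ℝ} (hA : A.IsSymm) {u : n → ℝ} (hu : u ≠ 0) :
    householder u * A = A ↔ A *ᵥ u = 0 := by
  have hc : 2 / (u ⬝ᵥ u) ≠ 0 := div_ne_zero two_ne_zero (mt dotProduct_self_eq_zero.mp hu)
  rw [householder, sub_mul, one_mul, sub_eq_self, smul_mul, vecMulVec_mul, ← mulVec_transpose,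
    hA.eq, smul_eq_zero, vecMulVec_eq_zero]
  simp [hc, hu]

lemma trace_mul_le_trace_of_posSemidef {P G : Matrix n n ℝ} (hP : P.PosSemidef)
    (hG : Gᵀ * G = 1) : (G * P).trace ≤ P.trace := by
  -- `2 (tr P - tr (G P)) = tr ((1 - G) P (1 - G)ᵀ) ≥ 0`
  have hnonneg := (hP.mul_mul_conjTranspose_same (1 - G)).trace_nonneg
  have hGP : (P * Gᵀ).trace = (G * P).trace := by
    rw [← trace_transpose, transpose_mul, transpose_transpose, hP.isSymm.eq]
  have hGPG : (G * P * Gᵀ).trace = P.trace := by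
    rw [trace_mul_comm, ← Matrix.mul_assoc, hG, Matrix.one_mul]
  simp only [conjTranspose_eq_transpose_of_trivial, transpose_sub, transpose_one, sub_mul,
    mul_sub, Matrix.one_mul, Matrix.mul_one, trace_sub, hGP, hGPG] at hnonneg
  linarith

attribute [local instance] Matrix.linftyOpNormedRing Matrix.linftyOpNormedAlgebra in
/-- First-order optimality along the one-parameter group of rotations `s ↦ exp (s K)`. -/
lemma trace_mul_eq_zero_of_forall_trace_le {N K : Matrix n n ℝ} (hK : Kᵀ = -K)
    (h : ∀ G : Matrix n n ℝ, Gᵀ * G = 1 → (G * N).trace ≤ N.trace) :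
    (K * N).trace = 0 := by
  have horth (s : ℝ) : (NormedSpace.exp (s • K))ᵀ * NormedSpace.exp (s • K) = 1 := by
    rw [← exp_transpose, transpose_smul, hK, smul_neg,
      ← exp_add_of_commute _ _ (Commute.refl (s • K)).neg_left, neg_add_cancel,
      NormedSpace.exp_zero]
  have hderiv :
      HasDerivAt (fun s : ℝ => (NormedSpace.exp (s • K) * N).trace) (K * N).trace 0 := by
    have hexp := (hasDerivAt_exp_smul_const (𝕂 := ℝ) K 0).mul_const N
    simp only [zero_smul, NormedSpace.exp_zero, Matrix.one_mul] at hexp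
    exact (traceLinearMap n ℝ ℝ).toContinuousLinearMap.hasFDerivAt.comp_hasDerivAt 0 hexp
  have hmax : IsLocalMax (fun s : ℝ => (NormedSpace.exp (s • K) * N).trace) 0 :=
    Eventually.of_forall fun s => by simpa using h _ (horth s)
  exact hmax.hasDerivAt_eq_zero hderiv

lemma posSemidef_of_forall_trace_mul_le {N : Matrix n n ℝ}
    (h : ∀ G : Matrix n n ℝ, Gᵀ * G = 1 → (G * N).trace ≤ N.trace) : N.PosSemidef := by
  have hsymm : N.IsSymm := IsSymm.ext fun i j => by
    have hK : (single i j (1 : ℝ) - single j i 1)ᵀ = -(single i j 1 - single j i 1) := by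
      rw [transpose_sub, transpose_single, transpose_single, neg_sub]
    have htrace := trace_mul_eq_zero_of_forall_trace_le hK h
    rw [sub_mul, trace_sub, trace_single_mul, trace_single_mul] at htrace
    simpa [sub_eq_zero] using htrace
  refine posSemidef_iff_dotProduct_mulVec.mpr ⟨isHermitian_iff_isSymm.mpr hsymm, fun u => ?_⟩
  have hu := h (householder u) (householder_transpose_mul_self u)
  rw [trace_householder_mul] at hu
  rw [star_trivial]
  rcases eq_or_ne u 0 with rfl | hu0
  · simp
  · have hpos : 0 < 2 / (u ⬝ᵥ u) :=
      div_pos two_pos (by simpa using dotProduct_star_self_pos_iff.mpr hu0)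
    nlinarith

open scoped MatrixOrder in
/-- Both `Qᵀ P` and `P` are positive square roots of `P²`. -/
lemma posSemidef_transpose_mul_iff {P Q : Matrix n n ℝ} (hP : P.PosSemidef) (hQ : Qᵀ * Q = 1) :
    (Qᵀ * P).PosSemidef ↔ Q * P = P := by
  constructor
  · intro h
    have hsq : (Qᵀ * P) ^ 2 = P ^ 2 := calc
      (Qᵀ * P) ^ 2 = (Qᵀ * P)ᵀ * (Qᵀ * P) := by rw [sq, h.isSymm.eq]
      _ = P * (Q * Qᵀ) * P := by
        rw [transpose_mul, transpose_transpose, hP.isSymm.eq]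
        noncomm_ring
      _ = P ^ 2 := by rw [mul_eq_one_comm.mp hQ, Matrix.mul_one, sq]
    have hQP : Qᵀ * P = P := (CFC.sq_eq_sq_iff _ _ h.nonneg hP.nonneg).mp hsq
    rw [← hQP, ← Matrix.mul_assoc, mul_eq_one_comm.mp hQ, Matrix.one_mul, hQP]
  · intro h
    have hQP : Qᵀ * P = P := by
      conv_lhs => rw [← h, ← Matrix.mul_assoc, hQ, Matrix.one_mul]
    rwa [hQP]

lemma forall_trace_le_iff_posSemidef {A Q : Matrix n n ℝ} (hQ : Qᵀ * Q = 1) :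
    (∀ R : Matrix n n ℝ, Rᵀ * R = 1 → (Rᵀ * A).trace ≤ (Qᵀ * A).trace) ↔
      (Qᵀ * A).PosSemidef := by
  constructor
  · refine fun h => posSemidef_of_forall_trace_mul_le fun G hG => ?_
    have hR := h (Q * Gᵀ) (transpose_mul_self_mul hQ (transpose_mul_self_transpose hG))
    rwa [transpose_mul, transpose_transpose, Matrix.mul_assoc] at hR
  · intro h R hR
    have hG := trace_mul_le_trace_of_posSemidef h
      (transpose_mul_self_mul (transpose_mul_self_transpose hR) hQ)
    rwa [Matrix.mul_assoc, ← Matrix.mul_assoc Q, mul_eq_one_comm.mp hQ, Matrix.one_mul] at hG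

end OrthogonalMaximization

section Kernels
variable {m n : Type*} [Fintype n]

lemma mul_eq_self_iff_mul_sub_one_eq_zero [DecidableEq n] {A Q : Matrix n n ℝ} (hA : A.IsSymm) :
    Q * A = A ↔ A * (Qᵀ - 1) = 0 := by
  rw [mul_sub, Matrix.mul_one, sub_eq_zero, ← transpose_inj, transpose_mul, hA.eq]

lemma mul_eq_zero_of_ker_le {A B : Matrix m n ℝ} {C : Matrix n n ℝ}
    (h : LinearMap.ker A.mulVecLin ≤ LinearMap.ker B.mulVecLin) (hAC : A * C = 0) :
    B * C = 0 :=
  ext_iff_mulVec.mpr fun v => by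
    rw [← mulVec_mulVec, zero_mulVec]
    exact h (show A *ᵥ (C *ᵥ v) = 0 by rw [mulVec_mulVec, hAC, zero_mulVec])

lemma ker_le_ker_of_forall_mul_eq_self [DecidableEq n] {A B : Matrix n n ℝ} (hA : A.IsSymm)
    (hB : B.IsSymm) (h : ∀ Q : Matrix n n ℝ, Qᵀ * Q = 1 → Q * A = A → Q * B = B) :
    LinearMap.ker A.mulVecLin ≤ LinearMap.ker B.mulVecLin := by
  intro u hu
  rcases eq_or_ne u 0 with rfl | hu0
  · exact Submodule.zero_mem _
  · exact (householder_mul_eq_self_iff hB hu0).mp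
      (h _ (householder_transpose_mul_self u) ((householder_mul_eq_self_iff hA hu0).mpr hu))

lemma forall_mul_eq_self_iff_iff_ker_eq [DecidableEq n] {A B : Matrix n n ℝ} (hA : A.IsSymm)
    (hB : B.IsSymm) :
    (∀ Q : Matrix n n ℝ, Qᵀ * Q = 1 → (Q * A = A ↔ Q * B = B)) ↔
      LinearMap.ker A.mulVecLin = LinearMap.ker B.mulVecLin := by
  constructor
  · intro h
    exact le_antisymm (ker_le_ker_of_forall_mul_eq_self hA hB fun Q hQ => (h Q hQ).mp)
      (ker_le_ker_of_forall_mul_eq_self hB hA fun Q hQ => (h Q hQ).mpr)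
  · intro h Q _
    rw [mul_eq_self_iff_mul_sub_one_eq_zero hA, mul_eq_self_iff_mul_sub_one_eq_zero hB]
    exact ⟨mul_eq_zero_of_ker_le h.le, mul_eq_zero_of_ker_le h.ge⟩

lemma ker_eq_ker_iff_rank_eq_rank {K : Type*} [Field K] {A B : Matrix m n K}
    (h : LinearMap.ker B.mulVecLin ≤ LinearMap.ker A.mulVecLin) :
    LinearMap.ker A.mulVecLin = LinearMap.ker B.mulVecLin ↔ B.rank = A.rank := by
  have hA := LinearMap.finrank_range_add_finrank_ker A.mulVecLin
  have hB := LinearMap.finrank_range_add_finrank_ker B.mulVecLin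
  rw [Matrix.rank, Matrix.rank]
  constructor
  · intro hker
    rw [hker] at hA
    omega
  · intro hrank
    exact (Submodule.eq_of_le_of_finrank_eq h (by omega)).symm

lemma ker_transpose_mul_self_le [Fintype m] (X Y : Matrix m n ℝ) :
    LinearMap.ker (Yᵀ * Y).mulVecLin ≤ LinearMap.ker (Xᵀ * Y).mulVecLin := by
  rw [ker_mulVecLin_transpose_mul_self]
  intro v hv
  simp only [LinearMap.mem_ker, mulVecLin_apply] at hv ⊢
  rw [← mulVec_mulVec, hv, mulVec_zero]

theorem posSemidef_and_rank_eq_iff [Fintype m] [DecidableEq n] (X Y : Matrix m n ℝ) :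
    ((Xᵀ * Y).PosSemidef ∧ (Yᵀ * Y).rank = (Xᵀ * Y).rank) ↔
      ∀ Q : Matrix n n ℝ, Qᵀ * Q = 1 →
        ((Qᵀ * (Xᵀ * Y)).PosSemidef ↔ (Qᵀ * (Yᵀ * Y)).PosSemidef) := by
  have hB := posSemidef_transpose_mul_self Y
  have key (hA : (Xᵀ * Y).PosSemidef) : (∀ Q : Matrix n n ℝ, Qᵀ * Q = 1 →
      ((Qᵀ * (Xᵀ * Y)).PosSemidef ↔ (Qᵀ * (Yᵀ * Y)).PosSemidef)) ↔
        (Yᵀ * Y).rank = (Xᵀ * Y).rank := by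
    rw [← ker_eq_ker_iff_rank_eq_rank (ker_transpose_mul_self_le X Y),
      ← forall_mul_eq_self_iff_iff_ker_eq hA.isSymm hB.isSymm]
    exact forall₂_congr fun Q hQ => by
      rw [posSemidef_transpose_mul_iff hA hQ, posSemidef_transpose_mul_iff hB hQ]
  constructor
  · rintro ⟨hA, hrank⟩
    exact (key hA).mpr hrank
  · intro h
    have hA : (Xᵀ * Y).PosSemidef := by simpa using (h 1 (by simp)).mpr (by simpa using hB)
    exact ⟨hA, (key hA).mp h⟩

end Kernels

section Frobenius
variable {m n : Type*} [Fintype m] [Fintype n]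

lemma frobNorm_nonneg (A : Matrix m n ℝ) : 0 ≤ frobNorm A := Real.sqrt_nonneg _

lemma frobNorm_sq (A : Matrix m n ℝ) : frobNorm A ^ 2 = (Aᵀ * A).trace := by
  rw [frobNorm, Real.sq_sqrt (by positivity), trace, Finset.sum_comm]
  simp [mul_apply, sq]

lemma frobNorm_sub_mul_sq [DecidableEq n] (L M : Matrix m n ℝ) {O : Matrix n n ℝ}
    (hO : Oᵀ * O = 1) :
    frobNorm (L - M * O) ^ 2 = frobNorm L ^ 2 + frobNorm M ^ 2 - 2 * (Oᵀ * (Mᵀ * L)).trace := by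
  have hcross : (Lᵀ * (M * O)).trace = (Oᵀ * (Mᵀ * L)).trace := by
    rw [← trace_transpose]
    simp only [transpose_mul, transpose_transpose, Matrix.mul_assoc]
  have hsquare : ((M * O)ᵀ * (M * O)).trace = (Mᵀ * M).trace := by
    rw [trace_mul_comm, transpose_mul, Matrix.mul_assoc, ← Matrix.mul_assoc O,
      mul_eq_one_comm.mp hO, Matrix.one_mul, trace_mul_comm]
  rw [frobNorm_sq, frobNorm_sq, frobNorm_sq, transpose_sub, Matrix.sub_mul, Matrix.mul_sub,
    Matrix.mul_sub, trace_sub, trace_sub, trace_sub, hcross, hsquare, transpose_mul,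
    Matrix.mul_assoc]
  ring

lemma frobNorm_sub_mul_le_iff [DecidableEq n] (L M : Matrix m n ℝ) {O O' : Matrix n n ℝ}
    (hO : Oᵀ * O = 1) (hO' : O'ᵀ * O' = 1) :
    frobNorm (L - M * O) ≤ frobNorm (L - M * O') ↔
      (O'ᵀ * (Mᵀ * L)).trace ≤ (Oᵀ * (Mᵀ * L)).trace := by
  rw [← sq_le_sq₀ (frobNorm_nonneg _) (frobNorm_nonneg _), frobNorm_sub_mul_sq L M hO,
    frobNorm_sub_mul_sq L M hO']
  constructor <;> intro h <;> linarith

end Frobenius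

lemma forall_sum_le_sum_iff {ι α : Type*} [Fintype ι] [DecidableEq ι] (p : α → Prop)
    (f : ι → α → ℝ) {x : ι → α} (hx : ∀ i, p (x i)) :
    (∀ y : ι → α, (∀ i, p (y i)) → ∑ i, f i (y i) ≤ ∑ i, f i (x i)) ↔
      ∀ i z, p z → f i z ≤ f i (x i) := by
  constructor
  · intro h i z hz
    have hy := h (Function.update x i z) ((Function.forall_update_iff x fun _ y => p y).mpr
      ⟨hz, fun j _ => hx j⟩)
    simp only [Function.apply_update f x i z] at hy
    rw [Finset.sum_update_of_mem (Finset.mem_univ i),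
      Finset.sum_eq_add_sum_sdiff_singleton_of_mem (Finset.mem_univ i)] at hy
    linarith
  · exact fun h y hy => Finset.sum_le_sum fun i _ => h i (y i) (hy i)

section Blocks
variable {d T : ℕ}

def blkDiag (B : Fin T → Matrix (Fin d) (Fin d) ℝ) : Mat d T :=
  (blockDiagonal B).submatrix (Equiv.prodComm (Fin T) (Fin d)) (Equiv.prodComm (Fin T) (Fin d))

lemma blkDiag_apply (B : Fin T → Matrix (Fin d) (Fin d) ℝ) (t s : Fin T) (i j : Fin d) :
    blkDiag B (t, i) (s, j) = if t = s then B t i j else 0 := by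
  simp [blkDiag, blockDiagonal_apply]

@[simp]
lemma blk_blkDiag (B : Fin T → Matrix (Fin d) (Fin d) ℝ) (t : Fin T) :
    blk (blkDiag B) t = B t := by
  ext i j
  simp [blk, blkDiag_apply]

lemma blkDiag_injective :
    Function.Injective (blkDiag : (Fin T → Matrix (Fin d) (Fin d) ℝ) → Mat d T) :=
  fun B C h => funext fun t => by rw [← blk_blkDiag B, h, blk_blkDiag]

lemma blkDiag_one : blkDiag 1 = (1 : Mat d T) := by
  rw [blkDiag, blockDiagonal_one, submatrix_one_equiv]

lemma transpose_blkDiag_mul_blkDiag (B C : Fin T → Matrix (Fin d) (Fin d) ℝ) :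
    (blkDiag B)ᵀ * blkDiag C = blkDiag fun t => (B t)ᵀ * C t := by
  simp only [blkDiag, transpose_submatrix, submatrix_mul_equiv, blockDiagonal_transpose,
    blockDiagonal_mul]

lemma memO_blkDiag_iff {B : Fin T → Matrix (Fin d) (Fin d) ℝ} :
    memO (blkDiag B) ↔ ∀ t, (B t)ᵀ * B t = 1 := by
  rw [memO, transpose_blkDiag_mul_blkDiag, ← blkDiag_one, blkDiag_injective.eq_iff, funext_iff]
  exact and_iff_right fun t s i j hts => by simp [blkDiag_apply, hts]

lemma blkDiag_blk {O : Mat d T} (hO : memO O) : blkDiag (blk O) = O := by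
  ext ⟨t, i⟩ ⟨s, j⟩
  rw [blkDiag_apply]
  split_ifs with hts
  · subst hts
    rfl
  · exact (hO.1 t s i j hts).symm

lemma transpose_mul_self_blk {O : Mat d T} (hO : memO O) (t : Fin T) :
    (blk O t)ᵀ * blk O t = 1 :=
  memO_blkDiag_iff.mp (by rwa [blkDiag_blk hO]) t

lemma forall_memO_iff {P : Mat d T → Prop} :
    (∀ O, memO O → P O) ↔
      ∀ B : Fin T → Matrix (Fin d) (Fin d) ℝ, (∀ t, (B t)ᵀ * B t = 1) → P (blkDiag B) :=
  ⟨fun h _ hB => h _ (memO_blkDiag_iff.mpr hB),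
    fun h _ hO => blkDiag_blk hO ▸ h _ (transpose_mul_self_blk hO)⟩

lemma trace_transpose_blkDiag_mul (B : Fin T → Matrix (Fin d) (Fin d) ℝ) (C : Mat d T) :
    ((blkDiag B)ᵀ * C).trace = ∑ t, ((B t)ᵀ * blk C t).trace := by
  simp [trace, mul_apply, blkDiag_apply, blk, Fintype.sum_prod_type]

lemma blk_transpose_mul (X Y : Mat d T) (t : Fin T) :
    blk (Xᵀ * Y) t = (colBlk X t)ᵀ * colBlk Y t := by
  ext i j
  simp [blk, colBlk, mul_apply]

end Blocks

section Optimizers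
variable {d T : ℕ}

lemma mem_OStar_iff_forall_le {L M O : Mat d T} :
    O ∈ OStar L M ↔ memO O ∧ ∀ O', memO O' → frobNorm (L - M * O) ≤ frobNorm (L - M * O') := by
  have hbdd : BddBelow {r | ∃ O' : Mat d T, memO O' ∧ r = frobNorm (L - M * O')} :=
    ⟨0, by rintro r ⟨O', -, rfl⟩; exact frobNorm_nonneg _⟩
  refine and_congr_right fun hO => ⟨fun h O' hO' => h ▸ csInf_le hbdd ⟨O', hO', rfl⟩, fun h => ?_⟩
  exact le_antisymm (le_csInf ⟨_, O, hO, rfl⟩ (by rintro r ⟨O', hO', rfl⟩; exact h O' hO'))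
    (csInf_le hbdd ⟨O, hO, rfl⟩)

lemma mem_OStar_iff {L M O : Mat d T} :
    O ∈ OStar L M ↔ memO O ∧ ∀ t, ((blk O t)ᵀ * blk (Mᵀ * L) t).PosSemidef := by
  rw [mem_OStar_iff_forall_le]
  refine and_congr_right fun hO => ?_
  calc (∀ O', memO O' → frobNorm (L - M * O) ≤ frobNorm (L - M * O'))
      ↔ ∀ O', memO O' → (O'ᵀ * (Mᵀ * L)).trace ≤ (Oᵀ * (Mᵀ * L)).trace :=
        forall₂_congr fun O' hO' => frobNorm_sub_mul_le_iff L M hO.2 hO'.2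
    _ ↔ ∀ B : Fin T → Matrix (Fin d) (Fin d) ℝ, (∀ t, (B t)ᵀ * B t = 1) →
          ∑ t, ((B t)ᵀ * blk (Mᵀ * L) t).trace ≤ ∑ t, ((blk O t)ᵀ * blk (Mᵀ * L) t).trace := by
        rw [forall_memO_iff, ← blkDiag_blk hO]
        simp only [trace_transpose_blkDiag_mul, blk_blkDiag]
    _ ↔ ∀ t, ∀ R : Matrix (Fin d) (Fin d) ℝ, Rᵀ * R = 1 →
          (Rᵀ * blk (Mᵀ * L) t).trace ≤ ((blk O t)ᵀ * blk (Mᵀ * L) t).trace :=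
        forall_sum_le_sum_iff (fun R => Rᵀ * R = 1) (fun t R => (Rᵀ * blk (Mᵀ * L) t).trace)
          (transpose_mul_self_blk hO)
    _ ↔ ∀ t, ((blk O t)ᵀ * blk (Mᵀ * L) t).PosSemidef :=
        forall_congr' fun t => forall_trace_le_iff_posSemidef (transpose_mul_self_blk hO t)

lemma one_mem_OStar_self (L : Mat d T) : (1 : Mat d T) ∈ OStar L L := by
  rw [mem_OStar_iff, ← blkDiag_one, memO_blkDiag_iff]
  refine ⟨fun _ => by simp, fun t => ?_⟩
  rw [blk_blkDiag, Pi.one_apply, transpose_one, Matrix.one_mul, blk_transpose_mul]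
  exact posSemidef_transpose_mul_self _

lemma blkDiag_update_one_mem_OStar_iff {L M : Mat d T} (h1 : (1 : Mat d T) ∈ OStar L M)
    (t : Fin T) {Q : Matrix (Fin d) (Fin d) ℝ} (hQ : Qᵀ * Q = 1) :
    blkDiag (Function.update 1 t Q) ∈ OStar L M ↔ (Qᵀ * blk (Mᵀ * L) t).PosSemidef := by
  rw [← blkDiag_one, mem_OStar_iff, memO_blkDiag_iff] at h1
  simp only [blk_blkDiag] at h1
  rw [mem_OStar_iff, memO_blkDiag_iff]
  simp only [blk_blkDiag, Function.forall_update_iff (1 : Fin T → Matrix (Fin d) (Fin d) ℝ)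
    (fun _ R => Rᵀ * R = 1), Function.forall_update_iff (1 : Fin T → Matrix (Fin d) (Fin d) ℝ)
    (fun s R => (Rᵀ * blk (Mᵀ * L) s).PosSemidef)]
  exact ⟨fun h => h.2.1, fun h => ⟨⟨hQ, fun s _ => h1.1 s⟩, h, fun s _ => h1.2 s⟩⟩

lemma OStar_eq_OStar_self_iff {L M : Mat d T} :
    OStar L M = OStar L L ↔ ∀ t, ∀ Q : Matrix (Fin d) (Fin d) ℝ, Qᵀ * Q = 1 →
      ((Qᵀ * blk (Mᵀ * L) t).PosSemidef ↔ (Qᵀ * blk (Lᵀ * L) t).PosSemidef) := by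
  constructor
  · intro h t Q hQ
    have h1 : (1 : Mat d T) ∈ OStar L M := h ▸ one_mem_OStar_self L
    rw [← blkDiag_update_one_mem_OStar_iff h1 t hQ,
      ← blkDiag_update_one_mem_OStar_iff (one_mem_OStar_self L) t hQ, h]
  · intro h
    ext O
    rw [mem_OStar_iff, mem_OStar_iff]
    exact and_congr_right fun hO => forall_congr' fun t => h t _ (transpose_mul_self_blk hO t)

end Optimizers

theorem stmt7_general (d T : ℕ) (L M : Mat d T) :
    (∀ t : Fin T, (blk (Mᵀ * L) t).PosSemidef ∧
        (blk (Lᵀ * L) t).rank = (blk (Mᵀ * L) t).rank) ↔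
    OStar L M = OStar L L := by
  rw [OStar_eq_OStar_self_iff]
  refine forall_congr' fun t => ?_
  rw [blk_transpose_mul, blk_transpose_mul]
  exact posSemidef_and_rank_eq_iff _ _

/-- `(MᵀL)_{t,t}` is positive semidefinite with
`rk((LᵀL)_{t,t}) = rk((MᵀL)_{t,t})` for all `t` iff `𝐎*(L,M) = 𝐎*(L,L)`. -/
theorem stmt7 (d T : ℕ) (hd : 0 < d) (hT : 0 < T) (L M : Mat d T)
    (hL : memL L) (hM : memL M) :
    (∀ t : Fin T, (blk (Mᵀ * L) t).PosSemidef ∧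
        (blk (Lᵀ * L) t).rank = (blk (Mᵀ * L) t).rank) ↔
    OStar L M = OStar L L :=
  stmt7_general d T L M
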